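/- arXiv:2404.14245 — 9 statements merged into one kernel-verified Lean document; each statement's English description precedes it below -/
import Mathlib

section
/- If Σ is a finite alphabet, f : List Σ → ℕ is in #FA, and c ∈ ℕ, then the truncated subtraction w ↦ max(f(w) − c, 0) (i.e., f(w) ∸ c in ℕ) is in #FA. -/
/-- A function `f : List α → ℕ` on words over a finite alphabet `α` is in #FA
(computed by a finite ℕ-weighted automaton) if there are matrices `A σ` and
vectors `a`, `b` over ℕ such that `f w = aᵀ · A w₁ ⋯ A wₗ · b`. -/
def InFA {α : Type} [Fintype α] (f : List α → ℕ) : Prop :=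
  ∃ (n : ℕ) (A : α → Matrix (Fin n) (Fin n) ℕ) (a b : Fin n → ℕ),
    ∀ w : List α, f w = dotProduct a (Matrix.mulVec (List.prod (List.map A w)) b)

/-!
Expand every weight into that many parallel edges, so that `f w` counts runs on `w` (each
weighted by its final weight) and the endpoints of the runs form a list, ordered
lexicographically by run. A new automaton guesses a run and tracks, deterministically, the set
of states reached by lexicographically smaller runs; its final weight is one less than the
original exactly when no smaller run ends in a state of positive final weight. This removes one
unit from the first run that contributes anything, giving `f w - 1`; iterate `c` times.
-/

open Matrix

namespace NatAutomaton

variable {α Q : Type} [DecidableEq Q]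

def countVec (l : List Q) : Q → ℕ := fun q => l.count q

def countMatrix (r : Q → List Q) : Matrix Q Q ℕ := Matrix.of fun p q => (r p).count q

noncomputable def listOfCounts [Fintype Q] (v : Q → ℕ) : List Q :=
  Finset.univ.toList.flatMap fun q => List.replicate (v q) q

/-- The endpoints of all runs on `w` starting from the states in `l`, where `r σ p` lists the
`σ`-successors of `p` with multiplicity, in lexicographic order of runs. -/
def runList (r : α → Q → List Q) (l : List Q) (w : List α) : List Q :=
  w.foldl (fun L σ => L.flatMap (r σ)) l

def reach (r : Q → List Q) (B : Finset Q) : Finset Q :=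
  B.biUnion fun p => (r p).toFinset

def markSeen : Finset Q → List Q → List (Finset Q × Q)
  | _, [] => []
  | B, x :: xs => (B, x) :: markSeen (insert x B) xs

def subOneAtFirst (b : Q → ℕ) (p : Finset Q × Q) : ℕ :=
  if ∃ q ∈ p.1, b q ≠ 0 then b p.2 else b p.2 - 1

section Counting

variable [Fintype Q]

theorem sum_map_eq_countVec_dotProduct (l : List Q) (b : Q → ℕ) :
    (l.map b).sum = countVec l ⬝ᵥ b := by
  rw [Finset.sum_list_map_count, dotProduct]
  refine Finset.sum_subset (Finset.subset_univ _) fun q _ hq => ?_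
  simp [List.count_eq_zero.mpr (by simpa using hq)]

theorem countVec_listOfCounts (v : Q → ℕ) : countVec (listOfCounts v) = v := by
  ext q
  simp [countVec, listOfCounts, List.count_flatMap, List.count_replicate]

theorem countVec_flatMap (l : List Q) (r : Q → List Q) :
    countVec (l.flatMap r) = countVec l ᵥ* countMatrix r := by
  ext q
  rw [countVec, List.count_flatMap, sum_map_eq_countVec_dotProduct]
  rfl

theorem countVec_runList (r : α → Q → List Q) (l : List Q) (w : List α) :
    countVec (runList r l w) = countVec l ᵥ* (w.map fun σ => countMatrix (r σ)).prod := by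
  induction w generalizing l with
  | nil => simp [runList]
  | cons σ w ih =>
    rw [runList, List.foldl_cons, ← runList, ih, countVec_flatMap, vecMul_vecMul]
    rfl

end Counting

theorem reach_empty (r : Q → List Q) : reach r ∅ = ∅ := Finset.biUnion_empty

theorem reach_insert (r : Q → List Q) (e : Q) (B : Finset Q) :
    reach r (insert e B) = (r e).toFinset ∪ reach r B := Finset.biUnion_insert

theorem markSeen_append (l₁ l₂ : List Q) (B : Finset Q) :
    markSeen B (l₁ ++ l₂) = markSeen B l₁ ++ markSeen (B ∪ l₁.toFinset) l₂ := by
  induction l₁ generalizing B with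
  | nil => simp [markSeen]
  | cons x l ih => simp [markSeen, ih, Finset.insert_union, Finset.union_insert]

/-- The states seen before a successor of `e` are the successors of the states seen before `e`,
together with the earlier successors of `e` itself. -/
theorem markSeen_flatMap (r : Q → List Q) (l : List Q) (B : Finset Q) :
    markSeen (reach r B) (l.flatMap r)
      = (markSeen B l).flatMap fun p => markSeen (reach r p.1) (r p.2) := by
  induction l generalizing B with
  | nil => simp [markSeen]
  | cons e l ih =>
    rw [List.flatMap_cons, markSeen_append, Finset.union_comm, ← reach_insert, ih]
    simp [markSeen]

theorem markSeen_runList (r : α → Q → List Q) (l : List Q) (w : List α) :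
    markSeen ∅ (runList r l w)
      = runList (fun σ p => markSeen (reach (r σ) p.1) (r σ p.2)) (markSeen ∅ l) w := by
  induction w generalizing l with
  | nil => rfl
  | cons σ w ih =>
    rw [runList, List.foldl_cons, ← runList, ih, ← reach_empty (r σ), markSeen_flatMap]
    rfl

theorem sum_map_subOneAtFirst (b : Q → ℕ) (l : List Q) (B : Finset Q) :
    ((markSeen B l).map (subOneAtFirst b)).sum
      = if ∃ q ∈ B, b q ≠ 0 then (l.map b).sum else (l.map b).sum - 1 := by
  induction l generalizing B with
  | nil => split_ifs <;> rfl
  | cons x l ih =>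
    simp only [markSeen, List.map_cons, List.sum_cons, ih, subOneAtFirst,
      Finset.exists_mem_insert]
    by_cases hB : ∃ q ∈ B, b q ≠ 0
    · simp [hB]
    · by_cases hx : b x = 0 <;> simp [hB, hx]
      omega

end NatAutomaton

open NatAutomaton

theorem InFA.of_matrix {α Q : Type} [Fintype α] [Fintype Q] [DecidableEq Q] {f : List α → ℕ}
    (A : α → Matrix Q Q ℕ) (a b : Q → ℕ) (hf : ∀ w, f w = a ⬝ᵥ (w.map A).prod *ᵥ b) :
    InFA f := by
  let e := Fintype.equivFin Q
  refine ⟨Fintype.card Q, fun σ => reindexAlgEquiv ℕ ℕ e (A σ), a ∘ e.symm, b ∘ e.symm,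
    fun w => ?_⟩
  have hprod : (w.map fun σ => reindexAlgEquiv ℕ ℕ e (A σ)).prod
      = reindexAlgEquiv ℕ ℕ e (w.map A).prod := by
    rw [map_list_prod, List.map_map]
    rfl
  rw [hf, hprod, coe_reindexAlgEquiv, reindex_apply, submatrix_mulVec_equiv,
    dotProduct_comp_equiv_symm]
  simp [Function.comp_def]

theorem InFA.of_runList {α Q : Type} [Fintype α] [Fintype Q] [DecidableEq Q]
    (r : α → Q → List Q) (l : List Q) (b : Q → ℕ) :
    InFA fun w => ((runList r l w).map b).sum :=
  InFA.of_matrix (fun σ => countMatrix (r σ)) (countVec l) b fun w => by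
    rw [sum_map_eq_countVec_dotProduct, countVec_runList, dotProduct_mulVec]

theorem InFA.exists_runList {α : Type} [Fintype α] {f : List α → ℕ} (hf : InFA f) :
    ∃ (n : ℕ) (r : α → Fin n → List (Fin n)) (l : List (Fin n)) (b : Fin n → ℕ),
      ∀ w, f w = ((runList r l w).map b).sum := by
  obtain ⟨n, A, a, b, hf⟩ := hf
  refine ⟨n, fun σ p => listOfCounts (A σ p), listOfCounts a, b, fun w => ?_⟩
  have hA : ∀ σ, countMatrix (fun p => listOfCounts (A σ p)) = A σ := fun σ => by
    ext p q
    exact congrFun (countVec_listOfCounts (A σ p)) q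
  rw [hf, sum_map_eq_countVec_dotProduct, countVec_runList, countVec_listOfCounts,
    dotProduct_mulVec]
  simp only [hA]

theorem InFA.sub_one {α : Type} [Fintype α] {f : List α → ℕ} (hf : InFA f) :
    InFA fun w => f w - 1 := by
  obtain ⟨n, r, l, b, hf⟩ := hf.exists_runList
  convert InFA.of_runList (fun σ p => markSeen (reach (r σ) p.1) (r σ p.2)) (markSeen ∅ l)
    (subOneAtFirst b) using 2 with w
  rw [← markSeen_runList, sum_map_subOneAtFirst, hf]
  simp

/-- #FA is closed under truncated subtraction of a constant. -/
theorem inFA_sub_const {α : Type} [Fintype α] (f : List α → ℕ)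
    (hf : InFA f) (c : ℕ) : InFA (fun w => f w - c) := by
  induction c with
  | zero => simpa using hf
  | succ c ih => simpa only [Nat.sub_sub] using ih.sub_one
end

section
/- If Σ is a finite alphabet, f : List Σ → ℕ is in #FA, and c ∈ ℕ, then the clamped function w ↦ min(f(w), c) is in #FA. -/
/-!
Saturating at `c` is a semiring congruence on `ℕ`: `x ≡ y` iff `min x c = min y c`. Its
quotient `R` is a finite semiring and `min (f w) c` is read off the image of `f w` in `R`,
which is `aᵀ · A w₁ ⋯ A wₗ · b` computed over `R`. The partial products `A w₁ ⋯ A wᵢ` over `R`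
range over the finite set of `R`-matrices, so they are the states of a deterministic automaton,
and deterministic automata with ℕ-valued output are weighted automata with 0/1 matrices.
-/

open Matrix

theorem List.foldl_mul_eq_mul_prod_map {ι M : Type*} [Monoid M] (g : ι → M) (l : List ι) (m : M) :
    l.foldl (· * g ·) m = m * (l.map g).prod := by
  induction l generalizing m with
  | nil => simp
  | cons i l ih => simp [ih, mul_assoc]

theorem Matrix.mulVec_of_ite_eq {ι : Type*} [Fintype ι] [DecidableEq ι] (g : ι → ι) (v : ι → ℕ) :
    (of fun i j => if j = g i then 1 else 0) *ᵥ v = v ∘ g := by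
  ext i
  simp [mulVec, dotProduct]

theorem inFA_foldl {α : Type} [Fintype α] {S : Type*} [Finite S] (δ : S → α → S) (s₀ : S) (out : S → ℕ) :
    InFA fun w => out (w.foldl δ s₀) := by
  classical
  let e := Finite.equivFin S
  let T : α → Matrix (Fin (Nat.card S)) (Fin (Nat.card S)) ℕ := fun σ =>
    of fun i j => if j = e (δ (e.symm i) σ) then 1 else 0
  have hprod : ∀ w : List α,
      (w.map T).prod *ᵥ (out ∘ e.symm) = fun i => out (w.foldl δ (e.symm i)) := by
    intro w
    induction w with
    | nil => ext i; simp
    | cons σ w ih =>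
      ext i
      simp [← mulVec_mulVec, ih, T, mulVec_of_ite_eq]
  refine ⟨Nat.card S, T, Pi.single (e s₀) 1, out ∘ e.symm, fun w => ?_⟩
  simp [hprod, single_dotProduct]

theorem inFA_comp_ringHom {α : Type} [Fintype α] {f : List α → ℕ} (hf : InFA f)
    {R : Type*} [Semiring R] [Finite R] (φ : ℕ →+* R) (out : R → ℕ) :
    InFA fun w => out (φ (f w)) := by
  obtain ⟨n, A, a, b, hA⟩ := hf
  let A' : α → Matrix (Fin n) (Fin n) R := fun σ => (A σ).map φ
  have hrun : ∀ w : List α, φ (f w) = (φ ∘ a) ⬝ᵥ (w.foldl (· * A' ·) 1 *ᵥ (φ ∘ b)) := by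
    intro w
    have hprod : ((w.map A).prod).map φ = (w.map A').prod := by
      rw [← RingHom.mapMatrix_apply, map_list_prod, List.map_map]; rfl
    rw [hA, RingHom.map_dotProduct, List.foldl_mul_eq_mul_prod_map, one_mul, ← hprod]
    congr 1
    ext i
    exact RingHom.map_mulVec φ _ _ i
  simp_rw [hrun]
  exact inFA_foldl (· * A' ·) 1 fun M => out ((φ ∘ a) ⬝ᵥ (M *ᵥ (φ ∘ b)))

section Clamp

variable {c : ℕ}

theorem min_mul_right_congr {x y : ℕ} (h : min x c = min y c) (u : ℕ) :
    min (x * u) c = min (y * u) c := by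
  obtain rfl | hu := Nat.eq_zero_or_pos u
  · simp
  obtain hx | hx := le_or_gt c x
  · have hy : c ≤ y := by omega
    have := hx.trans (Nat.le_mul_of_pos_right x hu)
    have := hy.trans (Nat.le_mul_of_pos_right y hu)
    omega
  · obtain rfl : x = y := by omega
    rfl

variable (c) in
def clampCon : RingCon ℕ where
  r x y := min x c = min y c
  iseqv := ⟨fun _ => rfl, Eq.symm, Eq.trans⟩
  add' {_ _ _ _} h h' := by omega
  mul' {x y u v} h h' := by
    rw [min_mul_right_congr h, mul_comm y u, mul_comm y v, min_mul_right_congr h']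

instance : Finite (clampCon c).Quotient :=
  Finite.of_surjective (fun k : Fin (c + 1) => ((k : ℕ) : (clampCon c).Quotient)) fun q =>
    Quotient.inductionOn' q fun x =>
      ⟨⟨min x c, by omega⟩, (RingCon.eq _).2 (min_eq_left (min_le_right x c))⟩

variable (c) in
def clampVal : (clampCon c).Quotient → ℕ :=
  Quotient.lift (s := (clampCon c).toSetoid) (min · c) fun _ _ h => h

end Clamp

/-- #FA is closed under clamping with a constant. -/
theorem inFA_min_const {α : Type} [Fintype α] (f : List α → ℕ)
    (hf : InFA f) (c : ℕ) : InFA (fun w => min (f w) c) :=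
  inFA_comp_ringHom hf (clampCon c).mk' (clampVal c)
end

section
/- If Σ is a finite alphabet, f : List Σ → ℕ is in #FA, and c ∈ ℕ with c ≥ 1, then the function w ↦ ⌊f(w) / c⌋ (natural number division) is in #FA. -/
/-!
Let `u = aᵀ A(w₁) ⋯ A(wₗ)` be the row vector reached after reading `w`, so `f w = u ⬝ᵥ b`.
Write `u = c q + r` with `0 ≤ rᵢ < c`. The residue vector `r` changes deterministically:
after a letter with matrix `M` it becomes `r M mod c`, which ranges over the finite set
`(ℤ/c)ⁿ`. Meanwhile the quotient vector becomes `q M + ⌊r M / c⌋`, an affine map of `q`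
that depends only on `r`, i.e. a linear map of `(1, q)`. So an automaton with states
(residue vector, coordinate of `(1, q)`) can keep `(1, q)` in the block of the current residue
and zero elsewhere, and output `f w / c = q ⬝ᵥ b + ⌊r ⬝ᵥ b / c⌋`.
-/

open Matrix

theorem vecMul_list_prod_map_of_intertwine {α ι κ S : Type*} [Fintype ι] [DecidableEq ι]
    [Fintype κ] [DecidableEq κ] [Semiring S] {Φ : (ι → S) → κ → S}
    {A : α → Matrix ι ι S} {B : α → Matrix κ κ S} (h : ∀ u σ, Φ u ᵥ* B σ = Φ (u ᵥ* A σ))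
    (u : ι → S) (w : List α) : Φ u ᵥ* (w.map B).prod = Φ (u ᵥ* (w.map A).prod) := by
  induction w generalizing u with
  | nil => simp
  | cons σ w ih => simp only [List.map_cons, List.prod_cons, ← vecMul_vecMul, h, ih]

theorem InFA.of_fintype {α κ : Type} [Fintype α] [Fintype κ] [DecidableEq κ] {f : List α → ℕ}
    (A : α → Matrix κ κ ℕ) (a b : κ → ℕ) (h : ∀ w, f w = a ᵥ* (w.map A).prod ⬝ᵥ b) :
    InFA f := by
  let e := Fintype.equivFin κ
  have hreindex : ∀ (u : κ → ℕ) σ,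
      u ∘ e.symm ᵥ* (A σ).submatrix e.symm e.symm = (u ᵥ* A σ) ∘ e.symm := by
    intro u σ
    rw [submatrix_vecMul_equiv, Equiv.symm_symm, Function.comp_assoc, e.symm_comp_self,
      Function.comp_id]
  refine ⟨Fintype.card κ, fun σ => (A σ).submatrix e.symm e.symm, a ∘ e.symm, b ∘ e.symm,
    fun w => ?_⟩
  rw [dotProduct_mulVec, vecMul_list_prod_map_of_intertwine (Φ := (· ∘ e.symm)) hreindex, h,
    comp_equiv_symm_dotProduct, Function.comp_assoc, e.symm_comp_self, Function.comp_id]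

section GuardedProduct

variable {R κ S : Type*} [DecidableEq R] [Semiring S]

def guardedVec (r : R) (v : κ → S) : R × κ → S :=
  fun x => if x.1 = r then v x.2 else 0

-- The deterministic automaton `δ` on `R` run alongside weighted transitions `Q r` chosen by
-- its current state `r`.
def guardedMatrix (δ : R → R) (Q : R → Matrix κ κ S) : Matrix (R × κ) (R × κ) S :=
  of fun x y => if y.1 = δ x.1 then Q x.1 x.2 y.2 else 0

variable [Fintype R] [Fintype κ]

theorem guardedVec_dotProduct (r : R) (v : κ → S) (x : R × κ → S) :
    guardedVec r v ⬝ᵥ x = v ⬝ᵥ fun k => x (r, k) := by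
  simp [guardedVec, dotProduct, Fintype.sum_prod_type]

theorem guardedVec_vecMul_guardedMatrix (δ : R → R) (Q : R → Matrix κ κ S) (r : R)
    (v : κ → S) : guardedVec r v ᵥ* guardedMatrix δ Q = guardedVec (δ r) (v ᵥ* Q r) := by
  funext ⟨r', k'⟩
  rw [vecMul, guardedVec_dotProduct]
  by_cases h : r' = δ r <;> simp [guardedVec, guardedMatrix, vecMul, h]

end GuardedProduct

theorem dotProduct_option_elim {ι S : Type*} [Fintype ι] [Semiring S] (y₁ y₂ : S)
    (x₁ x₂ : ι → S) :
    (fun o : Option ι => o.elim y₁ x₁) ⬝ᵥ (fun o => o.elim y₂ x₂) = y₁ * y₂ + x₁ ⬝ᵥ x₂ := by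
  simp [dotProduct, Fintype.sum_option]

section Division

variable {ι : Type*} [Fintype ι] (c : ℕ)

theorem dotProduct_eq_mul_div_add_mod (u x : ι → ℕ) :
    u ⬝ᵥ x = c * ((fun i => u i / c) ⬝ᵥ x) + (fun i => u i % c) ⬝ᵥ x := by
  simp only [dotProduct, Finset.mul_sum, ← Finset.sum_add_distrib, ← mul_assoc, ← add_mul,
    Nat.div_add_mod]

theorem dotProduct_div (u x : ι → ℕ) :
    (u ⬝ᵥ x) / c = (fun i => u i / c) ⬝ᵥ x + ((fun i => u i % c) ⬝ᵥ x) / c := by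
  obtain rfl | hc := c.eq_zero_or_pos
  · simp
  · rw [dotProduct_eq_mul_div_add_mod c u x, Nat.mul_add_div hc]

def divVec (u : ι → ℕ) : Option ι → ℕ :=
  fun o => o.elim 1 fun i => u i / c

-- The affine map `q ↦ q M + ⌊r M / c⌋` as a linear map of `(1, q)`, with `none` indexing `1`.
def divStep (M : Matrix ι ι ℕ) (r : ι → ℕ) : Matrix (Option ι) (Option ι) ℕ :=
  of fun o o' => o'.elim (o.elim 1 0) fun j => o.elim ((r ᵥ* M) j / c) fun i => M i j

theorem divVec_dotProduct (u x : ι → ℕ) :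
    divVec c u ⬝ᵥ (fun o => o.elim (((fun i => u i % c) ⬝ᵥ x) / c) x) = (u ⬝ᵥ x) / c := by
  unfold divVec
  rw [dotProduct_option_elim, one_mul, dotProduct_div c u x, add_comm]

theorem divVec_vecMul_divStep (u : ι → ℕ) (M : Matrix ι ι ℕ) :
    divVec c u ᵥ* divStep c M (fun i => u i % c) = divVec c (u ᵥ* M) := by
  funext o'
  cases o' with
  | none =>
    unfold divVec
    simp [vecMul, divStep, dotProduct_option_elim]
  | some j => exact divVec_dotProduct c u fun i => M i j

end Division

section DivAutomaton

variable {ι : Type*} [Fintype ι] [DecidableEq ι] (c : ℕ)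

def divEncoding (u : ι → ℕ) : (ι → ZMod c) × Option ι → ℕ :=
  guardedVec (fun i => (u i : ZMod c)) (divVec c u)

def divMatrix (M : Matrix ι ι ℕ) :
    Matrix ((ι → ZMod c) × Option ι) ((ι → ZMod c) × Option ι) ℕ :=
  guardedMatrix (· ᵥ* M.map Nat.cast) fun r => divStep c M fun i => (r i).val

def divOutput (x : ι → ℕ) : (ι → ZMod c) × Option ι → ℕ :=
  fun p => p.2.elim (((fun i => (p.1 i).val) ⬝ᵥ x) / c) x

variable [NeZero c]

theorem divEncoding_vecMul_divMatrix (u : ι → ℕ) (M : Matrix ι ι ℕ) :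
    divEncoding c u ᵥ* divMatrix c M = divEncoding c (u ᵥ* M) := by
  have residue_vecMul : (fun i => (u i : ZMod c)) ᵥ* M.map Nat.cast
      = fun j => ((u ᵥ* M) j : ZMod c) :=
    funext fun j => (RingHom.map_vecMul (Nat.castRingHom (ZMod c)) M u j).symm
  simp only [divEncoding, divMatrix, guardedVec_vecMul_guardedMatrix, ZMod.val_natCast,
    divVec_vecMul_divStep, residue_vecMul]

theorem divEncoding_dotProduct_divOutput (u x : ι → ℕ) :
    divEncoding c u ⬝ᵥ divOutput c x = (u ⬝ᵥ x) / c := by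
  simp only [divEncoding, divOutput, guardedVec_dotProduct, ZMod.val_natCast, divVec_dotProduct]

end DivAutomaton

/-- #FA is closed under (floored) division by a positive constant. -/
theorem inFA_div_const {α : Type} [Fintype α] (f : List α → ℕ)
    (hf : InFA f) (c : ℕ) (hc : 1 ≤ c) : InFA (fun w => f w / c) := by
  obtain ⟨n, A, a, b, hf⟩ := hf
  have : NeZero c := ⟨by omega⟩
  refine InFA.of_fintype (fun σ => divMatrix c (A σ)) (divEncoding c a) (divOutput c b)
    fun w => ?_
  rw [vecMul_list_prod_map_of_intertwine fun u σ => divEncoding_vecMul_divMatrix c u (A σ),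
    divEncoding_dotProduct_divOutput, hf, dotProduct_mulVec]
end

section
/- If Σ is a finite alphabet, f : List Σ → ℕ is in #FA, c ∈ ℕ with c ≥ 1, and d ∈ ℕ with d < c, then the indicator function w ↦ (1 if f(w) ≡ d (mod c) else 0) is in #FA. -/
open Matrix

section TransitionMatrix

variable {Q R : Type*} [DecidableEq Q] [Semiring R]

def transitionMatrix (δ : Q → Q) : Matrix Q Q R :=
  Matrix.of fun p q => if δ p = q then 1 else 0

theorem transitionMatrix_mulVec [Fintype Q] (δ : Q → Q) (v : Q → R) :
    transitionMatrix δ *ᵥ v = v ∘ δ := by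
  ext p
  simp [transitionMatrix, mulVec, dotProduct]

end TransitionMatrix

theorem inFA_of_fintype {α Q : Type} [Fintype α] [Fintype Q] [DecidableEq Q]
    (A : α → Matrix Q Q ℕ) (a b : Q → ℕ) :
    InFA fun w => a ⬝ᵥ (w.map A).prod *ᵥ b := by
  let e := Fintype.equivFin Q
  refine ⟨Fintype.card Q, fun σ => reindex e e (A σ), a ∘ e.symm, b ∘ e.symm, fun w => ?_⟩
  have hprod : (w.map fun σ => reindex e e (A σ)).prod = reindex e e (w.map A).prod := by
    simpa [List.map_map, Function.comp_def] using
      (map_list_prod (reindexRingEquiv ℕ e) (w.map A)).symm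
  rw [hprod, reindex_apply, submatrix_mulVec_equiv, Equiv.symm_symm, dotProduct_comp_equiv_symm]
  simp [Function.comp_def]

theorem inFA_comp_list_prod {α M : Type} [Fintype α] [Monoid M] [Fintype M]
    (h : α → M) (g : M → ℕ) :
    InFA fun w => g (w.map h).prod := by
  classical
  let B : α → Matrix M M ℕ := fun σ => transitionMatrix (· * h σ)
  have hrun : ∀ w : List α, (w.map B).prod *ᵥ g = fun m => g (m * (w.map h).prod) := by
    intro w
    induction w with
    | nil => simp
    | cons σ w ih =>
      rw [List.map_cons, List.prod_cons, ← mulVec_mulVec, ih, transitionMatrix_mulVec]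
      simp [Function.comp_def, mul_assoc]
  simpa [hrun, single_dotProduct] using inFA_of_fintype B (Pi.single 1 1) g

theorem RingHom.map_dotProduct_list_prod_mulVec {α Q R S : Type*} [Fintype Q] [DecidableEq Q]
    [Semiring R] [Semiring S] (φ : R →+* S) (A : α → Matrix Q Q R) (a b : Q → R)
    (w : List α) :
    φ (a ⬝ᵥ (w.map A).prod *ᵥ b) = (φ ∘ a) ⬝ᵥ (w.map fun σ => (A σ).map φ).prod *ᵥ (φ ∘ b) := by
  have hprod : ((w.map A).prod).map φ = (w.map fun σ => (A σ).map φ).prod := by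
    simpa [List.map_map, Function.comp_def] using map_list_prod φ.mapMatrix (w.map A)
  rw [RingHom.map_dotProduct, ← hprod]
  congr 1
  ext i
  exact RingHom.map_mulVec φ _ b i

theorem inFA_mod_indicator_general {α : Type} [Fintype α] (f : List α → ℕ)
    (hf : InFA f) (c : ℕ) (d : ℕ) (hd : d < c) :
    InFA (fun w => if f w % c = d then 1 else 0) := by
  obtain ⟨n, A, a, b, hfab⟩ := hf
  have : NeZero c := ⟨by omega⟩
  let φ := Nat.castRingHom (ZMod c)
  have hmod : ∀ w, f w % c = d ↔
      (φ ∘ a) ⬝ᵥ (w.map fun σ => (A σ).map φ).prod *ᵥ (φ ∘ b) = d := by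
    intro w
    rw [← RingHom.map_dotProduct_list_prod_mulVec, ← hfab, eq_natCast,
      ZMod.natCast_eq_natCast_iff', Nat.mod_eq_of_lt hd]
  simp_rw [hmod]
  exact inFA_comp_list_prod (fun σ => (A σ).map φ)
    fun M => if (φ ∘ a) ⬝ᵥ M *ᵥ (φ ∘ b) = d then 1 else 0

/-- #FA contains the indicator of a congruence condition
`f w ≡ d (mod c)` for constants `c ≥ 1` and `d < c`. -/
theorem inFA_mod_indicator {α : Type} [Fintype α] (f : List α → ℕ)
    (hf : InFA f) (c : ℕ) (hc : 1 ≤ c) (d : ℕ) (hd : d < c) :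
    InFA (fun w => if f w % c = d then 1 else 0) :=
  inFA_mod_indicator_general f hf c d hd
end

section
/- If Σ is a finite alphabet, f : List Σ → ℕ is in #FA, and c ∈ ℕ, then the function w ↦ (f(w) choose c) (the binomial coefficient, equal to 0 when f(w) < c) is in #FA. -/
/-!
Write `f w = v w ⬝ᵥ b` with `v w = a ᵥ* A w₁ ⋯ A wₗ`. The products `∏ i, (v i).choose (t i)` are
the coefficients of `∏ i, (1 + X i) ^ v i`. Multiplying `v` by a matrix `M` substitutes
`X i ↦ ∏ j, (1 + X j) ^ M i j - 1`, a polynomial without constant term, so the finitely many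
coefficients of degree at most `c` evolve linearly, with coefficients in `ℕ`. They form the state
vector of a new automaton, and `(f w).choose c` is one of them for the product `v w ᵥ* b`, with
`b` read as a one-column matrix.
-/

open MvPolynomial Matrix

namespace MvPolynomial

variable {σ ι κ K : Type*} [CommSemiring K]

theorem exists_eq_C_constantCoeff_add (p : MvPolynomial σ K) :
    ∃ r, constantCoeff r = 0 ∧ p = C (constantCoeff p) + r := by
  classical
  refine ⟨∑ d ∈ p.support.erase 0, monomial d (coeff d p), ?_, ?_⟩
  · simp [constantCoeff_monomial]
  · ext d
    by_cases hd : d = 0 <;>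
      simp [coeff_sum, coeff_monomial, coeff_C, hd, eq_comm, constantCoeff_eq]

theorem coeff_prod_pow_eq_zero_of_degree_lt {R : ι → MvPolynomial σ K}
    (hR : ∀ i, constantCoeff (R i) = 0) {s : σ →₀ ℕ} {t : ι →₀ ℕ} (h : s.degree < t.degree) :
    coeff s (t.prod fun i k => R i ^ k) = 0 := by
  rw [← coeff_coe]
  apply MvPowerSeries.coeff_of_lt_order
  calc (s.degree : ℕ∞) < t.degree := by exact_mod_cast h
    _ = ∑ i ∈ t.support, (t i : ℕ∞) := by simp [Finsupp.degree_apply]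
    _ ≤ ∑ i ∈ t.support, ((R i : MvPowerSeries σ K) ^ t i).order :=
      Finset.sum_le_sum fun i _ => MvPowerSeries.le_order_pow_of_constantCoeff_eq_zero _ <| by
        rw [← MvPowerSeries.coeff_zero_eq_constantCoeff_apply, coeff_coe, ← constantCoeff_eq, hR]
    _ ≤ _ := MvPowerSeries.le_order_prod _ _
    _ = _ := by simp [Finsupp.prod, ← coeToMvPowerSeries.ringHom_apply, map_prod]

theorem coeff_eval₂_C_eq_sum {R : ι → MvPolynomial σ K}
    (hR : ∀ i, constantCoeff (R i) = 0) (Q : MvPolynomial ι K) {s : σ →₀ ℕ}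
    {T : Finset (ι →₀ ℕ)} (hT : ∀ t, t.degree ≤ s.degree → t ∈ T) :
    coeff s (eval₂ C R Q) = ∑ t ∈ T, coeff t Q * coeff s (t.prod fun i k => R i ^ k) := by
  classical
  have hvanish : ∀ t ∉ T, coeff s (t.prod fun i k => R i ^ k) = 0 := fun t ht =>
    coeff_prod_pow_eq_zero_of_degree_lt hR (lt_of_not_ge (mt (hT t) ht))
  rw [eval₂_eq, coeff_sum]
  simp only [coeff_C_mul]
  rw [← Finset.sum_subset (Finset.inter_subset_left (s₂ := T)),
    Finset.sum_subset (Finset.inter_subset_right (s₁ := Q.support))]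
  · rfl
  · intro t _ ht
    simp_all
  · intro t _ ht
    simp_all [Finsupp.prod]

variable [Fintype ι] [Fintype κ]

theorem coeff_prod_one_add_X_pow (v : ι → ℕ) (t : ι →₀ ℕ) :
    coeff t (∏ i, (1 + X i : MvPolynomial ι K) ^ v i) = ∏ i, ((v i).choose (t i) : K) := by
  classical
  have hexpand : ∀ i, (1 + X i : MvPolynomial ι K) ^ v i =
      ∑ k ∈ Finset.range (v i + 1), monomial (Finsupp.single i k) ((v i).choose k : K) := by
    intro i
    rw [add_comm, add_pow]
    refine Finset.sum_congr rfl fun k _ => ?_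
    rw [one_pow, mul_one, X_pow_eq_monomial, ← map_natCast C, mul_comm, C_mul_monomial, mul_one]
  have hsingle : ∀ x : ι → ℕ, ∑ i, Finsupp.single i (x i) = t ↔ x = t := by
    intro x
    rw [← Finsupp.equivFunOnFinite_symm_eq_sum, Equiv.symm_apply_eq]
    rfl
  simp_rw [hexpand, Finset.prod_univ_sum, ← monomial_sum_prod, coeff_sum, coeff_monomial, hsingle]
  rw [Finset.sum_ite_eq', ite_eq_left_iff]
  intro ht
  obtain ⟨i, hi⟩ : ∃ i, v i < t i := by simpa using ht
  rw [Finset.prod_eq_zero (Finset.mem_univ i) (by rw [Nat.choose_eq_zero_of_lt hi, Nat.cast_zero])]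

theorem prod_one_add_X_pow_vecMul (M : Matrix ι κ ℕ) {R : ι → MvPolynomial κ K}
    (hR : ∀ i, ∏ j, (1 + X j) ^ M i j = 1 + R i) (v : ι → ℕ) :
    ∏ j, (1 + X j : MvPolynomial κ K) ^ (v ᵥ* M) j = eval₂ C R (∏ i, (1 + X i) ^ v i) := by
  calc ∏ j, (1 + X j : MvPolynomial κ K) ^ (v ᵥ* M) j
      = ∏ i, (∏ j, (1 + X j) ^ M i j) ^ v i := by
        simp only [← Finset.prod_pow, ← pow_mul]
        rw [Finset.prod_comm]
        simp only [Finset.prod_pow_eq_pow_sum, vecMul, dotProduct, mul_comm]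
    _ = eval₂ C R (∏ i, (1 + X i) ^ v i) := by simp [hR]

end MvPolynomial

abbrev ExponentsLE (ι : Type*) (c : ℕ) := {t : ι →₀ ℕ // t.degree ≤ c}

instance {ι : Type*} [Finite ι] (c : ℕ) : Finite (ExponentsLE ι c) :=
  (Finsupp.finite_of_degree_le c).to_subtype

noncomputable instance {ι : Type*} [Finite ι] (c : ℕ) : Fintype (ExponentsLE ι c) :=
  Fintype.ofFinite _

/-- The coefficients of degree at most `c` of `∏ i, (1 + X i) ^ v i`
(see `MvPolynomial.coeff_prod_one_add_X_pow`). -/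
def chooseVec {ι : Type*} [Fintype ι] (c : ℕ) (v : ι → ℕ) : ExponentsLE ι c → ℕ :=
  fun t => ∏ i, (v i).choose (t.1 i)

theorem exists_chooseVec_vecMul {ι κ : Type*} [Fintype ι] [Fintype κ] (M : Matrix ι κ ℕ)
    (c : ℕ) : ∃ T : Matrix (ExponentsLE ι c) (ExponentsLE κ c) ℕ,
      ∀ v, chooseVec c (v ᵥ* M) = chooseVec c v ᵥ* T := by
  choose R hR0 hsplit using fun i =>
    exists_eq_C_constantCoeff_add (∏ j, (1 + X j : MvPolynomial κ ℕ) ^ M i j)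
  have hR : ∀ i, ∏ j, (1 + X j) ^ M i j = 1 + R i := fun i => by simpa using hsplit i
  refine ⟨fun t s => coeff s.1 (t.1.prod fun i k => R i ^ k), fun v => funext fun s => ?_⟩
  calc chooseVec c (v ᵥ* M) s = coeff s.1 (∏ j, (1 + X j) ^ (v ᵥ* M) j) := by
        simp [chooseVec, coeff_prod_one_add_X_pow]
    _ = coeff s.1 (eval₂ C R (∏ i, (1 + X i) ^ v i)) := by
        rw [prod_one_add_X_pow_vecMul M hR]
    _ = ∑ t ∈ (Finsupp.finite_of_degree_le c).toFinset,
          coeff t (∏ i, (1 + X i) ^ v i) * coeff s.1 (t.prod fun i k => R i ^ k) :=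
        coeff_eval₂_C_eq_sum hR0 _ fun t ht => by simpa using ht.trans s.2
    _ = (chooseVec c v ᵥ* _) s := by
        rw [Finset.sum_subtype (F := inferInstanceAs (Fintype (ExponentsLE ι c))) _
          (p := fun t : ι →₀ ℕ => t.degree ≤ c) (by simp)]
        simp [vecMul, dotProduct, chooseVec, coeff_prod_one_add_X_pow]

section InFA

variable {α : Type} [Fintype α] {ι : Type*} [Fintype ι] [DecidableEq ι]

theorem inFA_of_fintype_s7 {f : List α → ℕ} (A : α → Matrix ι ι ℕ) (a b : ι → ℕ)
    (h : ∀ w, f w = a ⬝ᵥ (w.map A).prod *ᵥ b) : InFA f := by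
  let e := Fintype.equivFin ι
  refine ⟨Fintype.card ι, reindexAlgEquiv ℕ ℕ e ∘ A, a ∘ e.symm, b ∘ e.symm, fun w => ?_⟩
  rw [← List.map_map, ← map_list_prod, h]
  simp [reindex_apply, submatrix_mulVec_equiv, Function.comp_assoc]

theorem inFA_of_vecMul_snoc {f : List α → ℕ} (g : List α → ι → ℕ) (T : α → Matrix ι ι ℕ)
    (β : ι → ℕ) (hg : ∀ w σ, g (w ++ [σ]) = g w ᵥ* T σ) (hf : ∀ w, f w = g w ⬝ᵥ β) :
    InFA f := by
  have hprod : ∀ w, g w = g [] ᵥ* (w.map T).prod := by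
    intro w
    induction w using List.reverseRecOn with
    | nil => simp
    | append_singleton w σ ih => simp [hg, ih, vecMul_vecMul]
  exact inFA_of_fintype_s7 T (g []) β fun w => by rw [hf, hprod, dotProduct_mulVec]

end InFA

/-- #FA is closed under binomial coefficients with constant lower index. -/
theorem inFA_choose_const {α : Type} [Fintype α] (f : List α → ℕ)
    (hf : InFA f) (c : ℕ) : InFA (fun w => Nat.choose (f w) c) := by
  classical
  obtain ⟨n, A, a, b, hf⟩ := hf
  choose T hT using fun σ => exists_chooseVec_vecMul (A σ) c
  obtain ⟨U, hU⟩ := exists_chooseVec_vecMul (replicateCol Unit b) c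
  let singleC : ExponentsLE Unit c := ⟨Finsupp.single () c, by simp⟩
  refine inFA_of_vecMul_snoc (fun w => chooseVec c (a ᵥ* (w.map A).prod)) T (fun t => U t singleC)
    (fun w σ => by simp [List.prod_append, ← vecMul_vecMul, hT]) fun w => ?_
  calc (f w).choose c = chooseVec c (a ᵥ* (w.map A).prod ᵥ* replicateCol Unit b) singleC := by
        simp [chooseVec, singleC, hf, dotProduct_mulVec, vecMul, replicateCol_apply]
    _ = _ := by rw [hU]; rfl
end

section
/- If φ : ℕ → ℕ is a functional closure property of #FA and ψ : ℕ → ℕ is any function with ψ(n) = φ(n) for all but finitely many n ∈ ℕ, then ψ is also a functional closure property of #FA. -/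
/-- `φ : ℕ → ℕ` is a (univariate) functional closure property of #FA if
composing any #FA function with `φ` again yields an #FA function. -/
def ClosureProp (φ : ℕ → ℕ) : Prop :=
  ∀ (α : Type) [Fintype α] (f : List α → ℕ), InFA f → InFA (φ ∘ f)

open Matrix Kronecker

theorem Matrix.tensor_dotProduct_tensor {I J R : Type*} [Fintype I] [Fintype J] [CommSemiring R]
    (a u : I → R) (c v : J → R) :
    (fun p : I × J => a p.1 * c p.2) ⬝ᵥ (fun p => u p.1 * v p.2) = (a ⬝ᵥ u) * (c ⬝ᵥ v) := by
  simp only [dotProduct, Fintype.sum_prod_type, Finset.sum_mul_sum]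
  exact Finset.sum_congr rfl fun i _ => Finset.sum_congr rfl fun j _ => by ring

theorem Matrix.kronecker_mulVec_tensor {I J R : Type*} [Fintype I] [Fintype J] [CommSemiring R]
    (M : Matrix I I R) (N : Matrix J J R) (u : I → R) (v : J → R) :
    (M ⊗ₖ N) *ᵥ (fun p => u p.1 * v p.2) = fun p => (M *ᵥ u) p.1 * (N *ᵥ v) p.2 :=
  funext fun p => tensor_dotProduct_tensor (M p.1) u (N p.2) v

theorem Nat.min_dotProduct_min_left {I : Type*} [Fintype I] (k : ℕ) (v u : I → ℕ) :
    min ((fun i => min (v i) k) ⬝ᵥ u) k = min (v ⬝ᵥ u) k := by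
  by_cases hbig : ∃ i, k ≤ v i ∧ 0 < u i
  · obtain ⟨i, hv, hu⟩ := hbig
    have hcap : k ≤ (fun i => min (v i) k) ⬝ᵥ u :=
      calc k ≤ min (v i) k * u i := by rw [min_eq_right hv]; exact Nat.le_mul_of_pos_right k hu
        _ ≤ _ := Finset.single_le_sum (f := fun i => min (v i) k * u i) (by simp) (by simp)
    have hfull : k ≤ v ⬝ᵥ u :=
      calc k ≤ v i * u i := le_trans hv (Nat.le_mul_of_pos_right _ hu)
        _ ≤ _ := Finset.single_le_sum (f := fun i => v i * u i) (by simp) (by simp)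
    rw [min_eq_right hcap, min_eq_right hfull]
  · simp only [not_exists, not_and, not_lt, Nat.le_zero] at hbig
    congr 1
    refine Finset.sum_congr rfl fun i _ => ?_
    by_cases hv : k ≤ v i
    · simp [hbig i hv]
    · simp [min_eq_left (Nat.le_of_not_le hv)]

namespace InFA

variable {α : Type} [Fintype α]

theorem of_fintype_s8 {I : Type} [Fintype I] [DecidableEq I] {f : List α → ℕ}
    (A : α → Matrix I I ℕ) (a b : I → ℕ) (hf : ∀ w, f w = a ⬝ᵥ ((w.map A).prod *ᵥ b)) :
    InFA f := by
  let e := Fintype.equivFin I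
  refine ⟨_, fun σ => reindexAlgEquiv ℕ ℕ e (A σ), a ∘ e.symm, b ∘ e.symm, fun w => ?_⟩
  have hprod : (w.map fun σ => reindexAlgEquiv ℕ ℕ e (A σ)).prod
      = reindexAlgEquiv ℕ ℕ e (w.map A).prod := by
    rw [map_list_prod, List.map_map]; rfl
  rw [hprod, coe_reindexAlgEquiv, reindex_apply, submatrix_mulVec_equiv,
    comp_equiv_symm_dotProduct]
  simp [hf, Function.comp_assoc]

theorem add {f g : List α → ℕ} (hf : InFA f) (hg : InFA g) : InFA (f + g) := by
  obtain ⟨_, A, a, b, hf⟩ := hf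
  obtain ⟨_, B, c, d, hg⟩ := hg
  refine of_fintype_s8 (fun σ => fromBlocks (A σ) 0 0 (B σ)) (Sum.elim a c) (Sum.elim b d)
    fun w => ?_
  have hprod : (w.map fun σ => fromBlocks (A σ) 0 0 (B σ)).prod
      = fromBlocks (w.map A).prod 0 0 (w.map B).prod := by
    induction w with
    | nil => simp [fromBlocks_one]
    | cons σ w ih => simp [ih, fromBlocks_multiply]
  simp [hprod, fromBlocks_mulVec, hf, hg]

theorem mul {f g : List α → ℕ} (hf : InFA f) (hg : InFA g) : InFA (f * g) := by
  obtain ⟨_, A, a, b, hf⟩ := hf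
  obtain ⟨_, B, c, d, hg⟩ := hg
  refine of_fintype_s8 (fun σ => A σ ⊗ₖ B σ) (fun p => a p.1 * c p.2) (fun p => b p.1 * d p.2)
    fun w => ?_
  have hprod : (w.map fun σ => A σ ⊗ₖ B σ).prod = (w.map A).prod ⊗ₖ (w.map B).prod := by
    induction w with
    | nil => simp
    | cons σ w ih => simp [ih, mul_kronecker_mul]
  rw [hprod, kronecker_mulVec_tensor, tensor_dotProduct_tensor, Pi.mul_apply, hf, hg]

theorem of_foldl {Q : Type} [Fintype Q] [DecidableEq Q] (δ : Q → α → Q) (q₀ : Q) (F : Q → ℕ) :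
    InFA fun w => F (w.foldl δ q₀) := by
  let M : α → Matrix Q Q ℕ := fun σ => of fun q q' => if δ q σ = q' then 1 else 0
  have hM : ∀ σ G q, (M σ *ᵥ G) q = G (δ q σ) := by
    intro σ G q
    simp [M, mulVec, dotProduct, ite_mul]
  have hrun : ∀ (w : List α) q, ((w.map M).prod *ᵥ F) q = F (w.foldl δ q) := by
    intro w
    induction w with
    | nil => simp
    | cons σ w ih => intro q; simp [← mulVec_mulVec, hM, ih]
  exact of_fintype_s8 M (Pi.single q₀ 1) F fun w => by rw [single_one_dotProduct, hrun]

theorem comp_of_eventually_const {f : List α → ℕ} (hf : InFA f) {h : ℕ → ℕ} {k : ℕ}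
    (hk : ∀ m, k ≤ m → h m = h k) : InFA (h ∘ f) := by
  obtain ⟨n, A, a, b, hf⟩ := hf
  let cap : (Fin n → ℕ) → Fin n → Fin (k + 1) := fun v i => ⟨min (v i) k, by omega⟩
  let δ : (Fin n → Fin (k + 1)) → α → Fin n → Fin (k + 1) :=
    fun q σ => cap ((fun i => (q i : ℕ)) ᵥ* A σ)
  have hcap : ∀ v (P : Matrix (Fin n) (Fin n) ℕ),
      cap ((fun i => (cap v i : ℕ)) ᵥ* P) = cap (v ᵥ* P) :=
    fun v P => funext fun j => Fin.ext (Nat.min_dotProduct_min_left k v fun i => P i j)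
  have hrun : ∀ (w : List α) v, w.foldl δ (cap v) = cap (v ᵥ* (w.map A).prod) := by
    intro w
    induction w with
    | nil => simp
    | cons σ w ih => intro v; simp [δ, hcap, ih, vecMul_vecMul]
  have hmin : ∀ m, h (min m k) = h m := by
    intro m
    rcases le_total m k with hm | hm
    · rw [min_eq_left hm]
    · rw [min_eq_right hm, hk m hm]
  convert of_foldl δ (cap a) fun q => h (min ((fun i => (q i : ℕ)) ⬝ᵥ b) k) using 2 with w
  simp only [Function.comp_apply, hrun, hf]
  rw [Nat.min_dotProduct_min_left, ← dotProduct_mulVec, hmin]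

end InFA

/-- closure properties are stable under changing finitely many values. -/
theorem closureProp_of_eventually_eq (φ ψ : ℕ → ℕ)
    (hφ : ClosureProp φ) (h : {n : ℕ | ψ n ≠ φ n}.Finite) :
    ClosureProp ψ := by
  intro α _ f hf
  obtain ⟨N, hN⟩ : ∃ N, ∀ m ≥ N, ψ m = φ m := by
    rw [← Filter.eventually_atTop, ← Nat.cofinite_eq_atTop]
    exact Filter.eventually_cofinite.2 h
  let low : ℕ → ℕ := fun m => if m < N then ψ m else 0
  let high : ℕ → ℕ := fun m => if m < N then 0 else 1
  have hsplit : ψ ∘ f = low ∘ f + φ ∘ f * high ∘ f := by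
    funext w
    by_cases hw : f w < N
    · simp [low, high, hw]
    · simp [low, high, hw, hN _ (Nat.le_of_not_lt hw)]
  rw [hsplit]
  refine (hf.comp_of_eventually_const (k := N) ?_).add
    ((hφ α f hf).mul (hf.comp_of_eventually_const (k := N) ?_)) <;>
  · intro m hm
    simp [low, high, Nat.not_lt.2 hm]
end

section
/- Let r ∈ ℕ, and let φ ∈ ℚ[x] be given by φ(x) = Σ_{i=0}^{r} a_i · C(x, i) where each a_i ∈ ℤ and a_r > 0. Then there exist b_0, …, b_r ∈ ℕ and c_0, …, c_r ∈ ℕ such that, as polynomials in ℚ[x], φ(x) = Σ_{i=0}^{r} b_i · C(x − c_i, i). -/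
/-!
Induct on `r`. By Chu–Vandermonde, rewriting `φ(x) = ∑ aᵢ C(x, i)` in the basis `C(x − c, j)`
keeps the top coefficient `a_r` and turns `a_{r−1}` into `a_{r−1} + c·a_r`, which is positive
once `c > |a_{r−1}|`. Thus `φ(x) = a_r C(x − c, r) + ψ(x − c)` with `ψ` an integer combination of
`C(x, 0), …, C(x, r − 1)` with positive leading coefficient; the induction hypothesis applies
to `ψ`, and shifting its representation by `c` gives the one of `φ`.
-/

open Polynomial

/-- The binomial polynomial `C(x, c) = x(x−1)⋯(x−c+1)/c! ∈ ℚ[x]`. -/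
noncomputable def binPoly (c : ℕ) : Polynomial ℚ :=
  Polynomial.C ((Nat.factorial c : ℚ)⁻¹) * descPochhammer ℚ c

open Finset

theorem binPoly_eq_choose_X (n : ℕ) : binPoly n = Ring.choose (X : ℚ[X]) n := by
  have h := Ring.descPochhammer_eq_factorial_smul_choose (X : ℚ[X]) n
  rw [← aeval_eq_smeval, aeval_X_left_eq_map, descPochhammer_map, ← Nat.cast_smul_eq_nsmul ℚ,
    smul_eq_C_mul] at h
  rw [binPoly, h, ← mul_assoc, ← C_mul, inv_mul_cancel₀ (by positivity), C_1, one_mul]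

theorem binPoly_comp (n : ℕ) (q : ℚ[X]) : (binPoly n).comp q = Ring.choose q n := by
  rw [binPoly_eq_choose_X, ← coe_compRingHom_apply, Ring.map_choose, coe_compRingHom_apply, X_comp]

theorem binPoly_eq_sum_choose_smul_comp (n c : ℕ) :
    binPoly n =
      ∑ j ∈ range (n + 1), (c.choose (n - j) : ℚ) • (binPoly j).comp (X - C (c : ℚ)) := by
  conv_lhs => rw [← comp_X (p := binPoly n), binPoly_comp, ← sub_add_cancel X (c : ℚ[X]),
    Ring.add_choose_eq _ (Commute.all _ _), Nat.sum_antidiagonal_eq_sum_range_succ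
      (fun j k => Ring.choose (X - (c : ℚ[X])) j * Ring.choose (c : ℚ[X]) k)]
  refine sum_congr rfl fun j _ => ?_
  rw [binPoly_comp, map_natCast, Ring.choose_natCast, Nat.cast_smul_eq_nsmul, nsmul_eq_mul,
    mul_comm]

theorem comp_X_sub_C_comp_X_sub_C {R : Type*} [CommRing R] (p : R[X]) (u v : R) :
    (p.comp (X - C u)).comp (X - C v) = p.comp (X - C (u + v)) := by
  rw [comp_assoc, sub_comp, X_comp, C_comp, C_add, sub_sub, add_comm (C v)]

def shiftCoeff (a : ℕ → ℤ) (n c j : ℕ) : ℤ := ∑ i ∈ Icc j n, a i * c.choose (i - j)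

theorem shiftCoeff_self (a : ℕ → ℤ) (n c : ℕ) : shiftCoeff a n c n = a n := by
  simp [shiftCoeff]

theorem shiftCoeff_succ_self (a : ℕ → ℤ) (n c : ℕ) :
    shiftCoeff a (n + 1) c n = a n + a (n + 1) * c := by
  rw [shiftCoeff, sum_Icc_succ_top (by omega), Icc_self, sum_singleton]
  simp

theorem sum_smul_binPoly_eq_comp (a : ℕ → ℤ) (n c : ℕ) :
    ∑ i ∈ range (n + 1), (a i : ℚ) • binPoly i =
      (∑ j ∈ range (n + 1), (shiftCoeff a n c j : ℚ) • binPoly j).comp (X - C (c : ℚ)) := by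
  calc ∑ i ∈ range (n + 1), (a i : ℚ) • binPoly i
      = ∑ i ∈ range (n + 1), ∑ j ∈ range (i + 1),
          ((a i * c.choose (i - j) : ℤ) : ℚ) • (binPoly j).comp (X - C (c : ℚ)) := by
        refine sum_congr rfl fun i _ => ?_
        rw [binPoly_eq_sum_choose_smul_comp i c, smul_sum]
        simp only [smul_smul, Int.cast_mul, Int.cast_natCast]
    _ = ∑ j ∈ range (n + 1), ∑ i ∈ Icc j n,
          ((a i * c.choose (i - j) : ℤ) : ℚ) • (binPoly j).comp (X - C (c : ℚ)) := by
        refine sum_comm' fun i j => ?_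
        simp only [mem_range, mem_Icc]
        omega
    _ = _ := by
        simp only [← sum_smul, shiftCoeff, Int.cast_sum, Polynomial.sum_comp, smul_comp]

theorem exists_sum_range_eq_sum_shifted (r : ℕ) (a : ℕ → ℤ) (ha : 0 < a r) :
    ∃ b c : ℕ → ℕ, ∑ i ∈ range (r + 1), (a i : ℚ) • binPoly i =
      ∑ i ∈ range (r + 1), (b i : ℚ) • (binPoly i).comp (X - C (c i : ℚ)) := by
  induction r generalizing a with
  | zero =>
    obtain ⟨m, hm⟩ := Int.eq_ofNat_of_zero_le ha.le
    refine ⟨fun _ => m, fun _ => 0, ?_⟩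
    simp [hm]
  | succ r ih =>
    set c := (a r).natAbs + 1
    have hpos : 0 < shiftCoeff a (r + 1) c r := by
      have : (c : ℤ) ≤ a (r + 1) * c := le_mul_of_one_le_left (by positivity) ha
      rw [shiftCoeff_succ_self]
      omega
    obtain ⟨b, d, hbd⟩ := ih _ hpos
    obtain ⟨m, hm⟩ := Int.eq_ofNat_of_zero_le ha.le
    refine ⟨Function.update b (r + 1) m, Function.update (fun j => d j + c) (r + 1) c, ?_⟩
    rw [sum_smul_binPoly_eq_comp a (r + 1) c, sum_range_succ, hbd, shiftCoeff_self, add_comp,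
      Polynomial.sum_comp, sum_range_succ _ (r + 1), Function.update_self, Function.update_self,
      hm, smul_comp]
    congr 1
    refine sum_congr rfl fun j hj => ?_
    have hjr : j ≠ r + 1 := (mem_range.1 hj).ne
    rw [Function.update_of_ne hjr, Function.update_of_ne hjr, smul_comp, comp_X_sub_C_comp_X_sub_C,
      ← Nat.cast_add]

/-- a polynomial with integer coefficients in the binomial basis whose
leading coefficient is positive can be rewritten as a nonnegative integer combination
of shifted binomial polynomials `C(x − cᵢ, i)`. -/
theorem shifted_binomial_basis (r : ℕ) (a : Fin (r + 1) → ℤ)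
    (ha : 0 < a (Fin.last r)) :
    ∃ (b c : Fin (r + 1) → ℕ),
      (∑ i : Fin (r + 1), (a i : ℚ) • binPoly (i : ℕ)) =
        ∑ i : Fin (r + 1), (b i : ℚ) •
          (binPoly (i : ℕ)).comp (Polynomial.X - Polynomial.C ((c i : ℕ) : ℚ)) := by
  obtain ⟨b, c, h⟩ :=
    exists_sum_range_eq_sum_shifted r (fun n => a (Fin.ofNat (r + 1) n)) (by simpa using ha)
  refine ⟨fun i => b i, fun i => c i, ?_⟩
  rw [Fin.sum_univ_eq_sum_range (fun i => (b i : ℚ) • (binPoly i).comp (X - C (c i : ℚ))), ← h,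
    ← Fin.sum_univ_eq_sum_range (fun n => (a (Fin.ofNat (r + 1) n) : ℚ) • binPoly n)]
  simp
end

section
/- Let k ≥ 1 and A ∈ Matrix (Fin k) (Fin k) ℕ, let v ∈ Fin k, and define f : ℕ → ℕ by f(n) = (A^n)_{v,v}. Then exactly one of the following holds: (1) f(0) = 1 and f(n) = 0 for all n ≥ 1; (2) there is p ≥ 1 such that for all n ∈ ℕ, f(n) = 1 if p ∣ n and f(n) = 0 otherwise; (3) there are p ≥ 1 and a function g : ℕ → ℕ with g ∈ 2^{Θ(n)} such that for all n ∈ ℕ, f(n) = g(n) if p ∣ n and f(n) = 0 otherwise. -/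
/-- `g ∈ 2^{Θ(n)}`: there are real constants `γ₁, γ₂ > 0` and `N` with
`2^{γ₁ n} ≤ g n ≤ 2^{γ₂ n}` for all `n ≥ N`. -/
def ExpTheta (g : ℕ → ℕ) : Prop :=
  ∃ (γ₁ γ₂ : ℝ), 0 < γ₁ ∧ 0 < γ₂ ∧ ∃ N : ℕ, ∀ n : ℕ, N ≤ n →
    (2 : ℝ) ^ (γ₁ * n) ≤ (g n : ℝ) ∧ (g n : ℝ) ≤ (2 : ℝ) ^ (γ₂ * n)

/-!
Since `f n = (A ^ n) v v` counts closed walks at `v`, concatenation gives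
`f a * f b ≤ f (a + b)`, so the return times `{n | f n ≠ 0}` form an additive submonoid of
`ℕ`; it consists of multiples of its gcd `p` and contains all large ones. If some `f m ≥ 2`, gluing
`m`-walks to a return of bounded length gives `f n ≥ 2 ^ ((n - N) / m)` on large multiples of
`p`, while always `f n ≤ (∑ i j, A i j) ^ n`. If instead `f ≤ 1`, counting the walks of length
`2a + c` that pass through `v` at time `a` or at time `a + c` gives
`2 f(a) f(a+c) ≤ f(2a+c) + f(a)² f(c)`, so the return times are closed under differences;
hence `p` is one of them and `f = 1` exactly on `pℕ`.
-/

open Finset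

namespace ExpTheta

lemma of_two_pow_le_of_le_pow {g : ℕ → ℕ} {c C N : ℕ} (hc : 0 < c)
    (hlow : ∀ n ≥ N, 2 ^ ((n - N) / c) ≤ g n) (hup : ∀ n, g n ≤ C ^ n) : ExpTheta g := by
  refine ⟨1 / (2 * c), C + 1, by positivity, by positivity, 2 * N + 2 * c,
    fun n hn => ⟨?_, ?_⟩⟩
  · have hq : n ≤ 2 * c * ((n - N) / c) := by
      have := Nat.div_add_mod (n - N) c
      have := Nat.mod_lt (n - N) hc
      rw [mul_assoc]
      omega
    calc (2 : ℝ) ^ (1 / (2 * c) * (n : ℝ)) ≤ (2 : ℝ) ^ (((n - N) / c : ℕ) : ℝ) := by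
          gcongr
          · norm_num
          rw [div_mul_eq_mul_div, one_mul, div_le_iff₀ (by positivity)]
          exact_mod_cast (by linarith : n ≤ (n - N) / c * (2 * c))
    _ = ((2 ^ ((n - N) / c) : ℕ) : ℝ) := by rw [Real.rpow_natCast]; push_cast; rfl
    _ ≤ g n := by exact_mod_cast hlow n (by omega)
  · calc (g n : ℝ) ≤ ((2 ^ (C * n) : ℕ) : ℝ) := by
          rw [pow_mul]
          exact_mod_cast (hup n).trans (Nat.pow_le_pow_left Nat.lt_two_pow_self.le n)
    _ = (2 : ℝ) ^ ((C * n : ℕ) : ℝ) := by rw [Real.rpow_natCast]; push_cast; rfl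
    _ ≤ (2 : ℝ) ^ (((C : ℝ) + 1) * n) :=
          Real.rpow_le_rpow_of_exponent_le (by norm_num)
            (by push_cast; nlinarith [n.cast_nonneg (α := ℝ)])

lemma exists_dvd_lt {g : ℕ → ℕ} (hg : ExpTheta g) {p : ℕ} (hp : p ≠ 0) (B : ℕ) :
    ∃ n, p ∣ n ∧ B < g n := by
  obtain ⟨γ₁, _, hγ₁, _, N, hN⟩ := hg
  obtain ⟨M, hM⟩ := exists_nat_ge (B / γ₁)
  refine ⟨p * (N + M), dvd_mul_right _ _, ?_⟩
  have hn : N + M ≤ p * (N + M) := Nat.le_mul_of_pos_left _ (Nat.pos_of_ne_zero hp)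
  have hBn : (B : ℝ) ≤ γ₁ * (p * (N + M) : ℕ) := by
    rw [div_le_iff₀ hγ₁] at hM
    have : (M : ℝ) ≤ (p * (N + M) : ℕ) := by exact_mod_cast (by omega : M ≤ p * (N + M))
    nlinarith
  have hB : (B : ℝ) < (2 : ℝ) ^ (B : ℝ) := by
    rw [Real.rpow_natCast]; exact_mod_cast Nat.lt_two_pow_self
  have := hB.trans_le ((Real.rpow_le_rpow_of_exponent_le (by norm_num) hBn).trans
    (hN (p * (N + M)) (by omega)).1)
  exact_mod_cast this

end ExpTheta

lemma sum_row_add_sum_col_le {ι M : Type*} [Fintype ι] [DecidableEq ι] [AddCommMonoid M]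
    [PartialOrder M] [CanonicallyOrderedAdd M] (T : ι → ι → M) (v : ι) :
    ∑ u, T v u + ∑ w, T w v ≤ ∑ w, ∑ u, T w u + T v v := by
  rw [← add_sum_erase univ (fun w => T w v) (mem_univ v),
    ← add_sum_erase univ (fun w => ∑ u, T w u) (mem_univ v), add_left_comm, add_comm _ (T v v)]
  gcongr with w
  exact single_le_sum (fun u _ => zero_le) (mem_univ v)

namespace Matrix

section CanonicallyOrdered

variable {ι R : Type*} [Fintype ι] [DecidableEq ι] [CommSemiring R] [PartialOrder R]
  [CanonicallyOrderedAdd R] (A : Matrix ι ι R) (v : ι)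

lemma diag_pow_mul_le (a b : ℕ) : (A ^ a) v v * (A ^ b) v v ≤ (A ^ (a + b)) v v := by
  rw [pow_add, mul_apply]
  exact single_le_sum (f := fun w => (A ^ a) v w * (A ^ b) w v) (fun _ _ => zero_le) (mem_univ v)

lemma diag_pow_pow_le (a q : ℕ) : ((A ^ a) v v) ^ q ≤ (A ^ (a * q)) v v := by
  induction q with
  | zero => simp
  | succ q ih =>
    calc ((A ^ a) v v) ^ (q + 1) = ((A ^ a) v v) ^ q * (A ^ a) v v := pow_succ _ _
    _ ≤ (A ^ (a * q)) v v * (A ^ a) v v := by gcongr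
    _ ≤ (A ^ (a * (q + 1))) v v := diag_pow_mul_le A v _ _

lemma two_mul_diag_pow_le (a c : ℕ) :
    2 * ((A ^ a) v v * (A ^ (a + c)) v v) ≤
      (A ^ (a + c + a)) v v + (A ^ a) v v * (A ^ c) v v * (A ^ a) v v := by
  have key := sum_row_add_sum_col_le (fun w u => (A ^ a) v w * (A ^ c) w u * (A ^ a) u v) v
  have hrow : ∑ u, (A ^ a) v v * (A ^ c) v u * (A ^ a) u v = (A ^ a) v v * (A ^ (a + c)) v v := by
    simp only [mul_assoc, ← mul_sum, add_comm a c, pow_add, mul_apply]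
  have hcol : ∑ w, (A ^ a) v w * (A ^ c) w v * (A ^ a) v v = (A ^ a) v v * (A ^ (a + c)) v v := by
    rw [← sum_mul, mul_comm, pow_add, mul_apply]
  have htotal : ∑ w, ∑ u, (A ^ a) v w * (A ^ c) w u * (A ^ a) u v = (A ^ (a + c + a)) v v := by
    simp only [pow_add, mul_apply, sum_mul]
    exact sum_comm
  rw [hrow, hcol, htotal] at key
  rwa [two_mul]

lemma pow_apply_le_sum_pow (n : ℕ) (i j : ι) : (A ^ n) i j ≤ (∑ i, ∑ j, A i j) ^ n := by
  induction n generalizing i with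
  | zero => rw [pow_zero, pow_zero, one_apply]; split_ifs <;> simp
  | succ n ih =>
    rw [pow_succ', mul_apply, pow_succ']
    calc ∑ w, A i w * (A ^ n) w j ≤ ∑ w, A i w * (∑ i, ∑ j, A i j) ^ n := by
          gcongr with w
          exact ih w
    _ = (∑ w, A i w) * (∑ i, ∑ j, A i j) ^ n := by rw [sum_mul]
    _ ≤ _ := by
          gcongr ?_ * _
          exact single_le_sum (f := fun i => ∑ j, A i j) (fun _ _ => zero_le) (mem_univ i)

end CanonicallyOrdered

section Nat

variable {ι : Type*} [Fintype ι] [DecidableEq ι] (A : Matrix ι ι ℕ) (v : ι)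

def diagPowSupport : AddSubmonoid ℕ where
  carrier := {n | (A ^ n) v v ≠ 0}
  zero_mem' := by simp
  add_mem' {a b} ha hb :=
    ((Nat.pos_of_ne_zero (mul_ne_zero ha hb)).trans_le (diag_pow_mul_le A v a b)).ne'

noncomputable def diagPeriod : ℕ := Nat.setGcd (A.diagPowSupport v)

variable {A v}

@[simp]
lemma mem_diagPowSupport {n : ℕ} : n ∈ A.diagPowSupport v ↔ (A ^ n) v v ≠ 0 := Iff.rfl

lemma diagPeriod_dvd {n : ℕ} (h : (A ^ n) v v ≠ 0) : A.diagPeriod v ∣ n :=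
  Nat.setGcd_dvd_of_mem h

lemma diagPeriod_ne_zero {n : ℕ} (h : (A ^ n) v v ≠ 0) (hn : n ≠ 0) : A.diagPeriod v ≠ 0 :=
  fun h0 => hn (Nat.setGcd_eq_zero_iff.mp h0 h)

variable (A v) in
lemma exists_diag_pow_ne_zero_of_ge :
    ∃ N, ∀ n ≥ N, A.diagPeriod v ∣ n → (A ^ n) v v ≠ 0 := by
  obtain ⟨N, hN⟩ := Nat.exists_mem_closure_of_ge (A.diagPowSupport v)
  exact ⟨N, fun n hn hd => by simpa [AddSubmonoid.closure_eq] using hN n hn hd⟩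

lemma diag_pow_ne_zero_of_add {a c : ℕ} (hle : ∀ n, (A ^ n) v v ≤ 1) (ha : (A ^ a) v v ≠ 0)
    (hac : (A ^ (a + c)) v v ≠ 0) : (A ^ c) v v ≠ 0 := by
  have key := two_mul_diag_pow_le A v a c
  rw [Nat.le_antisymm (hle a) (Nat.one_le_iff_ne_zero.2 ha),
    Nat.le_antisymm (hle (a + c)) (Nat.one_le_iff_ne_zero.2 hac)] at key
  have := hle (a + c + a)
  omega

lemma diag_pow_diagPeriod_ne_zero (hle : ∀ n, (A ^ n) v v ≤ 1) :
    (A ^ A.diagPeriod v) v v ≠ 0 := by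
  obtain ⟨N, hN⟩ := exists_diag_pow_ne_zero_of_ge A v
  by_cases hp : A.diagPeriod v = 0
  · simp [hp]
  have hp' := Nat.pos_of_ne_zero hp
  refine diag_pow_ne_zero_of_add hle (a := A.diagPeriod v * N)
    (hN _ (Nat.le_mul_of_pos_left _ hp') (dvd_mul_right _ _)) ?_
  rw [← mul_add_one]
  exact hN _ ((Nat.le_mul_of_pos_left _ hp').trans' N.le_succ) (dvd_mul_right _ _)

lemma diag_pow_eq_zero_of_not_dvd {n : ℕ} (hd : ¬A.diagPeriod v ∣ n) : (A ^ n) v v = 0 :=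
  not_not.mp (mt diagPeriod_dvd hd)

lemma diag_pow_eq_ite_one (hle : ∀ n, (A ^ n) v v ≤ 1) (n : ℕ) :
    (A ^ n) v v = if A.diagPeriod v ∣ n then 1 else 0 := by
  split_ifs with hd
  · obtain ⟨j, rfl⟩ := hd
    have := diag_pow_pow_le A v (A.diagPeriod v) j
    have := pow_pos (Nat.pos_of_ne_zero (diag_pow_diagPeriod_ne_zero hle)) j
    have := hle (A.diagPeriod v * j)
    omega
  · exact diag_pow_eq_zero_of_not_dvd hd

lemma two_pow_le_diag_pow {m : ℕ} (hm : 2 ≤ (A ^ m) v v) :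
    ∃ N, ∀ n ≥ N, A.diagPeriod v ∣ n → 2 ^ ((n - N) / m) ≤ (A ^ n) v v := by
  have hm0 : m ≠ 0 := by rintro rfl; simp at hm
  obtain ⟨N, hN⟩ := exists_diag_pow_ne_zero_of_ge A v
  refine ⟨N, fun n hn hd => ?_⟩
  have hnr : n = m * ((n - N) / m) + (N + (n - N) % m) := by
    have := Nat.div_add_mod (n - N) m
    omega
  set q := (n - N) / m
  set r := N + (n - N) % m
  have hr : (A ^ r) v v ≠ 0 := by
    refine hN r (Nat.le_add_right _ _) ((Nat.dvd_add_right ?_).mp (hnr ▸ hd))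
    exact dvd_mul_of_dvd_left (diagPeriod_dvd (by omega)) q
  calc 2 ^ q ≤ (A ^ m) v v ^ q := Nat.pow_le_pow_left hm q
  _ ≤ (A ^ (m * q)) v v := diag_pow_pow_le A v m q
  _ ≤ (A ^ (m * q)) v v * (A ^ r) v v := Nat.le_mul_of_pos_right _ (Nat.pos_of_ne_zero hr)
  _ ≤ (A ^ n) v v := hnr ▸ diag_pow_mul_le A v _ _

lemma exists_period_diag_pow_eq_ite_one (hle : ∀ n, (A ^ n) v v ≤ 1) {m : ℕ}
    (hm : (A ^ m) v v ≠ 0) (hm0 : m ≠ 0) :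
    ∃ p, 1 ≤ p ∧ ∀ n, (A ^ n) v v = if p ∣ n then 1 else 0 :=
  ⟨_, Nat.one_le_iff_ne_zero.mpr (diagPeriod_ne_zero hm hm0), diag_pow_eq_ite_one hle⟩

lemma exists_period_diag_pow_eq_ite_expTheta {m : ℕ} (hm : 2 ≤ (A ^ m) v v) :
    ∃ p, 1 ≤ p ∧ ∃ g, ExpTheta g ∧ ∀ n, (A ^ n) v v = if p ∣ n then g n else 0 := by
  have hm0 : m ≠ 0 := by rintro rfl; simp at hm
  obtain ⟨N, hN⟩ := two_pow_le_diag_pow hm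
  -- off the multiples of the period any exponential filler will do
  refine ⟨A.diagPeriod v, Nat.one_le_iff_ne_zero.mpr (diagPeriod_ne_zero (by omega) hm0),
    fun n => if A.diagPeriod v ∣ n then (A ^ n) v v else 2 ^ n,
    ExpTheta.of_two_pow_le_of_le_pow (N := N) (C := ∑ i, ∑ j, A i j + 2)
      (Nat.pos_of_ne_zero hm0) (fun n hn => ?_) (fun n => ?_), fun n => ?_⟩
  · split_ifs with hd
    · exact hN n hn hd
    · exact Nat.pow_le_pow_right two_pos ((Nat.div_le_self _ _).trans (Nat.sub_le _ _))
  · split_ifs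
    · exact (pow_apply_le_sum_pow A n v v).trans (Nat.pow_le_pow_left (by omega) n)
    · exact Nat.pow_le_pow_left (by omega) n
  · split_ifs with hd
    · exact (if_pos hd).symm
    · exact diag_pow_eq_zero_of_not_dvd hd

end Nat

end Matrix

theorem diagonal_entry_trichotomy_general (k : ℕ)
    (A : Matrix (Fin k) (Fin k) ℕ) (v : Fin k) :
    let f : ℕ → ℕ := fun n => (A ^ n) v v
    let P1 : Prop := f 0 = 1 ∧ ∀ n : ℕ, 1 ≤ n → f n = 0
    let P2 : Prop := ∃ p : ℕ, 1 ≤ p ∧ ∀ n : ℕ, f n = if p ∣ n then 1 else 0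
    let P3 : Prop := ∃ p : ℕ, 1 ≤ p ∧ ∃ g : ℕ → ℕ, ExpTheta g ∧
      ∀ n : ℕ, f n = if p ∣ n then g n else 0
    (P1 ∧ ¬P2 ∧ ¬P3) ∨ (¬P1 ∧ P2 ∧ ¬P3) ∨ (¬P1 ∧ ¬P2 ∧ P3) := by
  intro f P1 P2 P3
  have hP1 : P1 → ∀ n, f n ≤ 1 := fun ⟨h0, hf⟩ n => by
    rcases n with _ | n
    · exact h0.le
    · simp [hf _ n.succ_pos]
  have hP2 : P2 → ∀ n, f n ≤ 1 := fun ⟨p, _, hf⟩ n => by rw [hf n]; split_ifs <;> omega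
  have hP3 : P3 → ∃ n, 1 < f n := by
    rintro ⟨p, hp, g, hg, hf⟩
    obtain ⟨n, hpn, hn⟩ := hg.exists_dvd_lt (Nat.one_le_iff_ne_zero.mp hp) 1
    exact ⟨n, by rwa [hf n, if_pos hpn]⟩
  have h12 : P1 → ¬P2 := fun h1 ⟨p, hp, hf⟩ => by simpa [h1.2 p hp] using hf p
  by_cases hbig : ∃ m, 1 < f m
  · obtain ⟨m, hm⟩ := hbig
    exact .inr <| .inr ⟨fun h => (hP1 h m).not_gt hm, fun h => (hP2 h m).not_gt hm,
      A.exists_period_diag_pow_eq_ite_expTheta hm⟩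
  push Not at hbig
  have hn3 : ¬P3 := fun h => (hP3 h).elim fun n hn => (hbig n).not_gt hn
  by_cases hpos : ∃ m, 1 ≤ m ∧ f m ≠ 0
  · obtain ⟨m, hm0, hm⟩ := hpos
    exact .inr <| .inl ⟨fun h => hm (h.2 m hm0),
      Matrix.exists_period_diag_pow_eq_ite_one hbig hm (by omega), hn3⟩
  push Not at hpos
  exact .inl ⟨⟨by simp [f], hpos⟩, h12 ⟨by simp [f], hpos⟩, hn3⟩

/-- trichotomy for the diagonal entries of powers of a nonnegative
integer matrix: exactly one of the three listed behaviours occurs. -/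
theorem diagonal_entry_trichotomy (k : ℕ) (hk : 1 ≤ k)
    (A : Matrix (Fin k) (Fin k) ℕ) (v : Fin k) :
    let f : ℕ → ℕ := fun n => (A ^ n) v v
    let P1 : Prop := f 0 = 1 ∧ ∀ n : ℕ, 1 ≤ n → f n = 0
    let P2 : Prop := ∃ p : ℕ, 1 ≤ p ∧ ∀ n : ℕ, f n = if p ∣ n then 1 else 0
    let P3 : Prop := ∃ p : ℕ, 1 ≤ p ∧ ∃ g : ℕ → ℕ, ExpTheta g ∧
      ∀ n : ℕ, f n = if p ∣ n then g n else 0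
    (P1 ∧ ¬P2 ∧ ¬P3) ∨ (¬P1 ∧ P2 ∧ ¬P3) ∨ (¬P1 ∧ ¬P2 ∧ P3) :=
  diagonal_entry_trichotomy_general k A v
end

section
/- Let φ ∈ ℚ[x₁, …, x_m] be written in the binomial basis as φ = Σ_{i=1}^{r} a_i · Π_{j=1}^{m} C(x_j, d_{i,j}) with all a_i ∈ ℤ and pairwise distinct degree vectors (d_{i,1}, …, d_{i,m}), and suppose the coefficient of every dominating term of φ is positive. Then there exist r′ ∈ ℕ, coefficients a′_1, …, a′_{r′} ∈ ℕ, shifts c_1, …, c_{r′} ∈ ℕ, and degree vectors (d′_{i,1}, …, d′_{i,m}) ∈ ℕ^m such that, as polynomials, φ = Σ_{i=1}^{r′} a′_i · Π_{j=1}^{m} C(x_j − c_i, d′_{i,j}). -/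
/-!
Re-expand every binomial around a single large shift `N` by Vandermonde's identity
`C(x, c) = Σ_{e ≤ c} C(N, c - e) C(x - N, e)`. The coefficient of `Π_j C(x_j - N, e_j)` becomes
`Σ_{i : e ≤ d_i} a_i Π_j C(N, d_{i,j} - e_j)`, a polynomial in `N` whose top-degree part comes from
the indices `i` maximising `Σ_j (d_{i,j} - e_j)`. Such an `i` is dominating among the terms with
nonzero coefficient, since a term dominating it would have a strictly larger sum; hence `a_i > 0`,
the top-degree part cannot cancel, and the coefficient is nonnegative for all large `N`. Only
finitely many `e` occur, so one `N` serves for all of them.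
-/

open Polynomial MvPolynomial

/-- The product `Π_j C(x_j − s, d_j)` of shifted binomial polynomials,
as a multivariate polynomial in `x₁, …, x_m`. -/
noncomputable def shiftedBinProd (m : ℕ) (s : ℕ) (d : Fin m → ℕ) :
    MvPolynomial (Fin m) ℚ :=
  ∏ j : Fin m, Polynomial.aeval (MvPolynomial.X j - MvPolynomial.C ((s : ℕ) : ℚ)) (binPoly (d j))

open Finset Filter

theorem binPoly_eval_natCast (c n : ℕ) : (binPoly c).eval (n : ℚ) = n.choose c := by
  rw [binPoly, Polynomial.eval_mul, Polynomial.eval_C, descPochhammer_eval_eq_descFactorial,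
    Nat.descFactorial_eq_factorial_mul_choose, Nat.cast_mul, inv_mul_cancel_left₀]
  exact_mod_cast c.factorial_ne_zero

theorem binPoly_natDegree (c : ℕ) : (binPoly c).natDegree = c := by
  rw [binPoly, natDegree_C_mul (by positivity), descPochhammer_natDegree]

theorem binPoly_leadingCoeff (c : ℕ) : (binPoly c).leadingCoeff = (c.factorial : ℚ)⁻¹ := by
  rw [binPoly, leadingCoeff_C_mul_of_isUnit (by simp [c.factorial_ne_zero]),
    (monic_descPochhammer ℚ c).leadingCoeff, mul_one]

theorem binPoly_ne_zero (c : ℕ) : binPoly c ≠ 0 := by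
  rw [← leadingCoeff_ne_zero, binPoly_leadingCoeff]
  positivity

theorem binPoly_eq_sum_choose_smul_comp_s15 (N c : ℕ) :
    binPoly c = ∑ e ∈ Iic c,
      (N.choose (c - e) : ℚ) • (binPoly e).comp (Polynomial.X - Polynomial.C (N : ℚ)) := by
  refine eq_of_infinite_eval_eq _ _ (Set.Infinite.mono ?_ <|
    Set.infinite_range_of_injective (Nat.cast_injective.comp (add_right_injective N)))
  rintro _ ⟨n, rfl⟩
  simp only [Function.comp_apply, Set.mem_ofPred_eq, Polynomial.eval_finsetSum,
    Polynomial.eval_smul, Polynomial.eval_comp, Polynomial.eval_sub, Polynomial.eval_X,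
    Polynomial.eval_C, Nat.cast_add, add_sub_cancel_left, binPoly_eval_natCast, smul_eq_mul]
  rw [← Nat.cast_add, binPoly_eval_natCast, Nat.add_choose_eq, ← Finset.Nat.sum_antidiagonal_swap]
  simp only [Prod.fst_swap, Prod.snd_swap]
  rw [Finset.Nat.sum_antidiagonal_eq_sum_range_succ (fun i j => N.choose j * n.choose i),
    Nat.range_succ_eq_Iic]
  push_cast
  rfl

theorem aeval_binPoly_eq_sum {A : Type*} [CommRing A] [Algebra ℚ A] (y : A) (N c : ℕ) :
    Polynomial.aeval y (binPoly c) =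
      ∑ e ∈ Iic c, (N.choose (c - e) : ℚ) • Polynomial.aeval (y - N) (binPoly e) := by
  rw [binPoly_eq_sum_choose_smul_comp_s15 N c, map_sum]
  refine sum_congr rfl fun e _ => ?_
  rw [map_smul, Polynomial.aeval_comp, map_sub, Polynomial.aeval_X, Polynomial.aeval_C,
    map_natCast]

theorem shiftedBinProd_zero_eq_sum (m N : ℕ) (d : Fin m → ℕ) :
    shiftedBinProd m 0 d =
      ∑ e ∈ Iic d, ((∏ j, N.choose (d j - e j) : ℕ) : ℚ) • shiftedBinProd m N e := by
  have hfactor (j : Fin m) :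
      Polynomial.aeval (X j - MvPolynomial.C ((0 : ℕ) : ℚ)) (binPoly (d j)) = ∑ e ∈ Iic (d j),
        (N.choose (d j - e) : ℚ) • Polynomial.aeval (X j - MvPolynomial.C (N : ℚ)) (binPoly e) := by
    rw [Nat.cast_zero, map_zero, sub_zero, map_natCast]
    exact aeval_binPoly_eq_sum (X j) N (d j)
  rw [shiftedBinProd, prod_congr rfl fun j _ => hfactor j, prod_univ_sum]
  refine sum_congr rfl fun e _ => ?_
  rw [shiftedBinProd, Finset.prod_smul, Nat.cast_prod]

namespace Polynomial

theorem leadingCoeff_sum_smul_nonneg {K ι : Type*} [Field K] [LinearOrder K]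
    [IsStrictOrderedRing K] (s : Finset ι) (a : ι → K) (Q : ι → K[X])
    (hQ : ∀ i ∈ s, 0 < (Q i).leadingCoeff)
    (ha : ∀ i ∈ s, a i ≠ 0 →
      (∀ i' ∈ s, a i' ≠ 0 → (Q i').natDegree ≤ (Q i).natDegree) → 0 < a i) :
    0 ≤ (∑ i ∈ s, a i • Q i).leadingCoeff := by
  classical
  set s' := s.filter (a · ≠ 0)
  have hsum : ∑ i ∈ s, a i • Q i = ∑ i ∈ s', a i • Q i :=
    (sum_filter_of_ne fun i _ h => left_ne_zero_of_smul h).symm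
  obtain hs' | hs' := s'.eq_empty_or_nonempty
  · simp [hsum, hs']
  obtain ⟨i₀, hi₀, hi₀max⟩ := exists_max_image s' (fun i => (Q i).natDegree) hs'
  set t := (Q i₀).natDegree
  have htop : ∀ i ∈ s', (Q i).natDegree = t → 0 < a i * (Q i).coeff t := by
    intro i hi hit
    rw [mem_filter] at hi
    refine mul_pos (ha i hi.1 hi.2 fun i' hi' ha' => ?_) (hit ▸ hQ i hi.1)
    exact hit ▸ hi₀max i' (mem_filter.2 ⟨hi', ha'⟩)
  have hterm : ∀ i ∈ s', 0 ≤ a i * (Q i).coeff t := by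
    intro i hi
    obtain hit | hit := (hi₀max i hi).lt_or_eq
    · rw [coeff_eq_zero_of_natDegree_lt hit, mul_zero]
    · exact (htop i hi hit).le
  have hcoeff : 0 < (∑ i ∈ s', a i • Q i).coeff t := by
    simp only [finsetSum_coeff, coeff_smul, smul_eq_mul]
    exact sum_pos' hterm ⟨i₀, hi₀, htop i₀ hi₀ rfl⟩
  have hdeg : (∑ i ∈ s', a i • Q i).natDegree ≤ t :=
    natDegree_sum_le_of_forall_le _ _ fun i hi => (natDegree_smul_le _ _).trans (hi₀max i hi)
  rw [hsum, leadingCoeff, natDegree_eq_of_le_of_coeff_ne_zero hdeg hcoeff.ne']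
  exact hcoeff.le

theorem eventually_atTop_eval_nonneg {K : Type*} [NormedField K] [LinearOrder K]
    [IsStrictOrderedRing K] [OrderTopology K] (P : K[X]) (hP : 0 ≤ P.leadingCoeff) :
    ∀ᶠ x in atTop, 0 ≤ P.eval x := by
  by_cases hdeg : 0 < P.degree
  · exact (P.tendsto_atTop_of_leadingCoeff_nonneg hdeg hP).eventually_ge_atTop 0
  · rw [eq_C_of_degree_le_zero (not_lt.1 hdeg)] at hP ⊢
    rw [leadingCoeff_C] at hP
    exact Eventually.of_forall fun _ => by rwa [eval_C]

end Polynomial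

theorem sum_tsub_lt_sum_tsub {σ : Type*} [Fintype σ] {d d' e : σ → ℕ} (he : e ≤ d) (h : d < d') :
    ∑ j, (d j - e j) < ∑ j, (d' j - e j) := by
  obtain ⟨hle, j, hj⟩ := Pi.lt_def.1 h
  refine sum_lt_sum (fun k _ => Nat.sub_le_sub_right (hle k) _) ⟨j, mem_univ j, ?_⟩
  have : e j ≤ d j := he j
  omega

section ShiftedCoeff

variable {ι σ : Type*} [Fintype ι] [Fintype σ]

open Classical in
/-- The coefficient of `Π_j C(x_j - N, e_j)` in `Σ_i a_i Π_j C(x_j, d_{i,j})`. -/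
noncomputable def shiftedCoeff (a : ι → ℤ) (d : ι → σ → ℕ) (N : ℕ) (e : σ → ℕ) : ℤ :=
  ∑ i with e ≤ d i, a i * ∏ j, (N.choose (d i j - e j) : ℤ)

theorem eventually_shiftedCoeff_nonneg (a : ι → ℤ) (d : ι → σ → ℕ) (hd : Function.Injective d)
    (hdom : ∀ i, a i ≠ 0 → (∀ i', i' ≠ i → a i' ≠ 0 → ¬ d i ≤ d i') → 0 < a i) (e : σ → ℕ) :
    ∀ᶠ N : ℕ in atTop, 0 ≤ shiftedCoeff a d N e := by
  classical
  set s := univ.filter (e ≤ d ·)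
  set Q : ι → ℚ[X] := fun i => ∏ j, binPoly (d i j - e j)
  have hQ_natDegree (i : ι) : (Q i).natDegree = ∑ j, (d i j - e j) := by
    simp only [Q, natDegree_prod _ _ fun j _ => binPoly_ne_zero _, binPoly_natDegree]
  have hQ_leadingCoeff (i : ι) : 0 < (Q i).leadingCoeff := by
    simp only [Q, leadingCoeff_prod, binPoly_leadingCoeff]
    positivity
  have hQ_eval (N : ℕ) :
      (shiftedCoeff a d N e : ℚ) = (∑ i ∈ s, (a i : ℚ) • Q i).eval (N : ℚ) := by
    simp [shiftedCoeff, s, Q, Polynomial.eval_finsetSum, Polynomial.eval_prod,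
      binPoly_eval_natCast]
  have hdominant : ∀ i ∈ s, (a i : ℚ) ≠ 0 →
      (∀ i' ∈ s, (a i' : ℚ) ≠ 0 → (Q i').natDegree ≤ (Q i).natDegree) → 0 < (a i : ℚ) := by
    intro i hi hai hmax
    rw [mem_filter] at hi
    refine Int.cast_pos.2 (hdom i (Int.cast_ne_zero.1 hai) fun i' hi'i hai' hle => ?_)
    have hlt : d i < d i' := lt_of_le_of_ne hle (hd.ne hi'i.symm)
    have := hmax i' (mem_filter.2 ⟨mem_univ i', hi.2.trans hle⟩) (Int.cast_ne_zero.2 hai')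
    rw [hQ_natDegree, hQ_natDegree] at this
    exact this.not_gt (sum_tsub_lt_sum_tsub hi.2 hlt)
  have hlc := leadingCoeff_sum_smul_nonneg s _ Q (fun i _ => hQ_leadingCoeff i) hdominant
  filter_upwards [tendsto_natCast_atTop_atTop.eventually (eventually_atTop_eval_nonneg _ hlc)]
    with N hN
  exact_mod_cast (hQ_eval N).symm ▸ hN

theorem sum_smul_shiftedBinProd_zero_eq {m : ℕ} (a : ι → ℤ) (d : ι → Fin m → ℕ) (N : ℕ) :
    ∑ i, (a i : ℚ) • shiftedBinProd m 0 (d i) = ∑ e ∈ univ.biUnion (fun i => Iic (d i)),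
      (shiftedCoeff a d N e : ℚ) • shiftedBinProd m N e := by
  classical
  simp only [shiftedBinProd_zero_eq_sum m N, smul_sum, smul_smul]
  rw [sum_comm' (t' := univ.biUnion fun i => Iic (d i)) (s' := fun e => univ.filter (e ≤ d ·))
    (by simpa using fun i e he => ⟨i, he⟩)]
  refine sum_congr rfl fun e _ => ?_
  simp [shiftedCoeff, sum_smul]

end ShiftedCoeff

/-- if `φ` is written in the (multivariate) binomial basis with integer
coefficients and pairwise distinct degree vectors, and every dominating term has a
positive coefficient, then `φ` is a nonnegative integer combination of products of
shifted binomial polynomials. -/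
theorem shifted_binomial_basis_multivariate (m r : ℕ)
    (a : Fin r → ℤ) (d : Fin r → Fin m → ℕ) (hd : Function.Injective d)
    (hdom : ∀ i : Fin r, a i ≠ 0 →
      (∀ i' : Fin r, i' ≠ i → a i' ≠ 0 → ¬ (∀ j, d i j ≤ d i' j)) → 0 < a i)
    (φ : MvPolynomial (Fin m) ℚ)
    (hφ : φ = ∑ i : Fin r, (a i : ℚ) • shiftedBinProd m 0 (d i)) :
    ∃ (r' : ℕ) (a' : Fin r' → ℕ) (c : Fin r' → ℕ) (d' : Fin r' → Fin m → ℕ),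
      φ = ∑ i : Fin r', (a' i : ℚ) • shiftedBinProd m (c i) (d' i) := by
  set E := univ.biUnion fun i => Iic (d i)
  obtain ⟨N, hN⟩ := ((eventually_all_finset E).2 fun e _ =>
    eventually_shiftedCoeff_nonneg a d hd hdom e).exists
  refine ⟨#E, fun k => (shiftedCoeff a d N (E.equivFin.symm k)).toNat, fun _ => N,
    fun k => E.equivFin.symm k, ?_⟩
  rw [hφ, sum_smul_shiftedBinProd_zero_eq a d N, ← sum_coe_sort E]
  refine Fintype.sum_equiv E.equivFin _ _ fun e => ?_
  simp only [Equiv.symm_apply_apply]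
  rw [← Int.cast_natCast, Int.toNat_of_nonneg (hN e e.2)]
end
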